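/- arXiv:math/0302055 — 3 statements merged into one kernel-verified Lean document; each statement's English description precedes it below -/
import Mathlib

section
/- For every complex number $y$ with $|y| < 1$, one has $\sum_{0 < j < k} \frac{y^k}{j\,k} = \frac{1}{2}\left(\log(1-y)\right)^2$, i.e. $Li_{1,1}(1,y) = \frac{1}{2} Li_1(y)^2$ where $Li_1(y) = -\log(1-y)$. -/
/-!
Multiply the Taylor series `-log(1-y) = ∑ yⁿ/n` by itself. In the resulting double series
over pairs `(m, n)`, the partial fraction identity `1/(mn) = (1/m + 1/n)/(m+n)` splits each
term `y^(m+n)/(mn)` into `y^k/(jk)` with `(j, k) = (m, m+n)` plus the same with `(j, k) = (n, m+n)`.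
Both maps are bijections of `ℕ × ℕ` onto `{j ≤ k}`, off which `y^k/(jk)` is not summed,
so each half sums to `Li_{1,1}(1,y)`; hence the square of the logarithm is twice the double
logarithm.
-/

open Complex

section Shear

variable {α : Type*} [AddCommMonoid α] [TopologicalSpace α] {f : ℕ × ℕ → α} {a : α}

theorem hasSum_comp_shear_iff (hf : ∀ j k, k < j → f (j, k) = 0) :
    HasSum (fun p : ℕ × ℕ => f (p.1, p.1 + p.2)) a ↔ HasSum f a := by
  have hinj : Function.Injective fun p : ℕ × ℕ => (p.1, p.1 + p.2) := by
    rintro ⟨m, n⟩ ⟨m', n'⟩ h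
    simp only [Prod.mk.injEq] at h
    ext <;> omega
  refine hinj.hasSum_iff fun ⟨j, k⟩ hjk => hf j k ?_
  by_contra! hle
  exact hjk ⟨(j, k - j), by simp [Nat.add_sub_cancel' hle]⟩

theorem hasSum_comp_swap_shear_iff (hf : ∀ j k, k < j → f (j, k) = 0) :
    HasSum (fun p : ℕ × ℕ => f (p.2, p.1 + p.2)) a ↔ HasSum f a := by
  rw [← hasSum_comp_shear_iff hf, ← (Equiv.prodComm ℕ ℕ).hasSum_iff]
  simp [Function.comp_def, add_comm]

theorem summable_of_summable_comp_shear (hf : ∀ j k, k < j → f (j, k) = 0)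
    (h : Summable fun p : ℕ × ℕ => f (p.1, p.1 + p.2)) : Summable f :=
  let ⟨_, ha⟩ := h
  ⟨_, (hasSum_comp_shear_iff hf).1 ha⟩

end Shear

noncomputable def doubleLogTerm (y : ℂ) (p : ℕ × ℕ) : ℂ :=
  if 0 < p.1 ∧ p.1 < p.2 then y ^ p.2 / ((p.1 : ℂ) * (p.2 : ℂ)) else 0

theorem doubleLogTerm_of_lt {y : ℂ} {j k : ℕ} (h : k < j) : doubleLogTerm y (j, k) = 0 :=
  if_neg fun h' => by dsimp at h'; omega

theorem doubleLogTerm_shear_add_swap (y : ℂ) (m n : ℕ) :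
    doubleLogTerm y (m, m + n) + doubleLogTerm y (n, m + n) = y ^ m / m * (y ^ n / n) := by
  rcases Nat.eq_zero_or_pos m with rfl | hm
  · simp [doubleLogTerm]
  rcases Nat.eq_zero_or_pos n with rfl | hn
  · simp [doubleLogTerm]
  unfold doubleLogTerm
  rw [if_pos ⟨hm, by omega⟩, if_pos ⟨hn, by omega⟩]
  have hm' : (m : ℂ) ≠ 0 := by exact_mod_cast hm.ne'
  have hn' : (n : ℂ) ≠ 0 := by exact_mod_cast hn.ne'
  have hmn : ((m : ℂ) + n) ≠ 0 := by exact_mod_cast (by omega : m + n ≠ 0)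
  push_cast
  field_simp
  ring

theorem norm_doubleLogTerm_shear_le (y : ℂ) (m n : ℕ) :
    ‖doubleLogTerm y (m, m + n)‖ ≤ ‖y ^ m / m * (y ^ n / n)‖ := by
  unfold doubleLogTerm
  split_ifs with h
  · simp only [norm_mul, norm_div, norm_pow, Complex.norm_natCast, pow_add, div_mul_div_comm]
    gcongr
    · obtain ⟨hm, hn⟩ := h
      have : 0 < n := by omega
      positivity
    · omega
  · rw [norm_zero]
    positivity

variable {y : ℂ}

theorem hasSum_mul_taylorSeries_neg_log (hy : ‖y‖ < 1) :
    HasSum (fun p : ℕ × ℕ => y ^ p.1 / p.1 * (y ^ p.2 / p.2)) (log (1 - y) ^ 2) := by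
  have hlog := hasSum_taylorSeries_neg_log hy
  have hsum := summable_mul_of_summable_norm hlog.summable.norm hlog.summable.norm
  simpa [sq] using hlog.mul hlog hsum

theorem summable_doubleLogTerm (hy : ‖y‖ < 1) : Summable (doubleLogTerm y) := by
  refine summable_of_summable_comp_shear (fun _ _ => doubleLogTerm_of_lt) ?_
  have hlog := (hasSum_taylorSeries_neg_log hy).summable.norm
  exact (hlog.mul_norm hlog).of_norm_bounded fun p => norm_doubleLogTerm_shear_le y p.1 p.2

/-- `Li_{1,1}(1,y) = ∑_{0<j<k} y^k/(jk) = (log(1-y))²/2 = Li₁(y)²/2`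
for `|y| < 1`, with the principal branch of the logarithm. -/
theorem doubleLog_one_left (y : ℂ) (hy : ‖y‖ < 1) :
    (∑' p : ℕ × ℕ,
      if 0 < p.1 ∧ p.1 < p.2 then y ^ p.2 / ((p.1 : ℂ) * (p.2 : ℂ)) else 0)
      = (Complex.log (1 - y)) ^ 2 / 2 := by
  obtain ⟨S, hS⟩ := summable_doubleLogTerm hy
  have hvanish : ∀ j k, k < j → doubleLogTerm y (j, k) = 0 := fun _ _ => doubleLogTerm_of_lt
  have htwice : HasSum (fun p : ℕ × ℕ => y ^ p.1 / p.1 * (y ^ p.2 / p.2)) (S + S) :=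
    ((hasSum_comp_shear_iff hvanish).2 hS |>.add <| (hasSum_comp_swap_shear_iff hvanish).2 hS)
      |>.congr_fun fun p => (doubleLogTerm_shear_add_swap y p.1 p.2).symm
  have hS2 : S + S = log (1 - y) ^ 2 := htwice.unique (hasSum_mul_taylorSeries_neg_log hy)
  change ∑' p, doubleLogTerm y p = _
  rw [hS.tsum_eq, ← hS2]
  ring
end

section
/- For all complex numbers $x, y$ with $|x| < 1$ and $|y| < 1$, one has $Li_{1,1}(x,y) = Li_2\left(\frac{xy - y}{1-y}\right) - Li_2\left(\frac{y}{y-1}\right) - Li_2(xy)$. -/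
/-- The real dilogarithm `Li₂(x) = -∫_0^x log(1-s)/s ds` (for `x < 1`). -/
noncomputable def Li2R (x : ℝ) : ℝ := -∫ s in (0:ℝ)..x, Real.log (1 - s) / s

/-- The double logarithm `Li_{1,1}(x,y) = ∑_{0<j<k} x^j y^k/(jk)`. -/
noncomputable def Li11 (x y : ℝ) : ℝ :=
  ∑' p : ℕ × ℕ, if 0 < p.1 ∧ p.1 < p.2 then x ^ p.1 * y ^ p.2 / ((p.1 : ℝ) * (p.2 : ℝ)) else 0

/-!
Both sides vanish at `y = 0` and, as functions of `y ∈ (-1, 1)`, have the derivative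
`-log (1 - x y) / (1 - y)`. For the dilogarithms this is the chain rule with
`Li₂'(u) = -log (1 - u) / u`. For the double logarithm, summing over `j` first gives
`Li_{1,1}(x, y) = ∑ₘ Pₘ(x) y^(m+1) / (m+1)` with `Pₘ` the `m`-th partial sum of
`-log (1 - x) = ∑ xⁿ / n`; termwise differentiation leaves `∑ₘ Pₘ(x) yᵐ`, and
`(1 - y) ∑ₘ Pₘ(x) yᵐ = ∑ₘ (Pₘ₊₁(x) - Pₘ(x)) y^(m+1) = -log (1 - x y)`.
-/

open Set Real MeasureTheory

/-- The continuous extension of the integrand `log (1 - s) / s` of `Li2R` across `s = 0`. -/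
local notation "ℓ" => dslope (fun s : ℝ => log (1 - s)) 0

lemma dslope_log_one_sub_of_ne {s : ℝ} (hs : s ≠ 0) : ℓ s = log (1 - s) / s := by
  rw [dslope_of_ne _ hs, slope_def_field]
  simp

lemma mul_dslope_log_one_sub (s : ℝ) : s * ℓ s = log (1 - s) := by
  simpa using sub_smul_dslope (fun s => log (1 - s)) 0 s

lemma hasDerivAt_log_one_sub_zero : HasDerivAt (fun s : ℝ => log (1 - s)) (-1) 0 := by
  simpa using ((hasDerivAt_id (0:ℝ)).const_sub 1).log (by norm_num)

lemma continuousOn_dslope_log_one_sub : ContinuousOn ℓ (Iio 1) := by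
  intro s hs
  refine ContinuousAt.continuousWithinAt ?_
  rcases eq_or_ne s 0 with rfl | hs0
  · exact continuousAt_dslope_same.2 hasDerivAt_log_one_sub_zero.differentiableAt
  · exact (continuousAt_dslope_of_ne hs0).2
      ((continuousAt_const.sub continuousAt_id).log (sub_ne_zero.2 (ne_of_gt hs)))

lemma Li2R_eq_neg_integral_dslope (t : ℝ) : Li2R t = -∫ s in (0:ℝ)..t, ℓ s := by
  rw [Li2R, intervalIntegral.integral_congr_ae]
  filter_upwards [volume.ae_ne 0] with s hs _ using (dslope_log_one_sub_of_ne hs).symm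

lemma hasDerivAt_Li2R {t : ℝ} (ht : t < 1) : HasDerivAt Li2R (-ℓ t) t := by
  have hcont := continuousOn_dslope_log_one_sub
  have hint : IntervalIntegrable ℓ volume 0 t :=
    (hcont.mono fun s hs => (mem_uIcc.1 hs).elim (fun h => h.2.trans_lt ht)
      (fun h => h.2.trans_lt one_pos)).intervalIntegrable
  rw [funext Li2R_eq_neg_integral_dslope]
  exact (intervalIntegral.integral_hasDerivAt_right hint
    (hcont.stronglyMeasurableAtFilter isOpen_Iio t ht) (hcont.continuousAt (Iio_mem_nhds ht))).neg

lemma Li2R_zero : Li2R 0 = 0 := by simp [Li2R]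

lemma dslope_log_one_sub_combination_eq {x t : ℝ} (hxt : x * t < 1) (ht : t < 1) :
    -ℓ ((x * t - t) / (1 - t)) * ((x - 1) / (1 - t) ^ 2) - -ℓ (t / (t - 1)) * (-1 / (t - 1) ^ 2)
      - -ℓ (x * t) * x = -log (1 - x * t) / (1 - t) := by
  rcases eq_or_ne t 0 with rfl | ht0
  · -- all three arguments vanish, and their contributions cancel whatever the value of `ℓ 0`
    simp
    ring
  have h1t : 1 - t ≠ 0 := sub_ne_zero.2 ht.ne'
  have ea :
      (x * t - t) / (1 - t) * ℓ ((x * t - t) / (1 - t)) = log (1 - x * t) - log (1 - t) := by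
    rw [mul_dslope_log_one_sub, ← log_div (by linarith) h1t]
    congr 1
    field_simp
    ring
  have eb : t / (t - 1) * ℓ (t / (t - 1)) = -log (1 - t) := by
    rw [mul_dslope_log_one_sub, ← log_inv]
    congr 1
    field_simp [sub_ne_zero.2 ht.ne]
    ring
  -- multiplied by `t (1 - t)`, each term becomes `u ℓ(u) = log (1 - u)` for its argument `u`
  calc _ = (-((x * t - t) / (1 - t) * ℓ ((x * t - t) / (1 - t))) + t / (t - 1) * ℓ (t / (t - 1))
          + (1 - t) * (x * t * ℓ (x * t))) / (t * (1 - t)) := by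
        field_simp [sub_ne_zero.2 ht.ne]
        ring
    _ = -log (1 - x * t) / (1 - t) := by
        rw [ea, eb, mul_dslope_log_one_sub]
        field_simp
        ring

lemma hasDerivAt_Li2R_combination {x t : ℝ} (hxt : x * t < 1) (ht : t < 1) :
    HasDerivAt (fun u => Li2R ((x * u - u) / (1 - u)) - Li2R (u / (u - 1)) - Li2R (x * u))
      (-log (1 - x * t) / (1 - t)) t := by
  have h1t : 1 - t ≠ 0 := sub_ne_zero.2 ht.ne'
  have ha : (x * t - t) / (1 - t) < 1 := by rw [div_lt_one (by linarith)]; linarith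
  have hb : t / (t - 1) < 1 := by rw [div_lt_one_of_neg (by linarith)]; linarith
  have hu : HasDerivAt (fun u => (x * u - u) / (1 - u)) ((x - 1) / (1 - t) ^ 2) t := by
    refine ((((hasDerivAt_id' t).const_mul x).sub (hasDerivAt_id' t)).div
      ((hasDerivAt_id' t).const_sub 1) h1t).congr_deriv ?_
    simp only [Pi.sub_apply]
    ring
  have hv : HasDerivAt (fun u => u / (u - 1)) (-1 / (t - 1) ^ 2) t := by
    refine ((hasDerivAt_id' t).div ((hasDerivAt_id' t).sub_const 1)
      (sub_ne_zero.2 ht.ne)).congr_deriv ?_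
    ring
  have hw : HasDerivAt (fun u => x * u) x t := by simpa using (hasDerivAt_id t).const_mul x
  exact ((((hasDerivAt_Li2R ha).comp t hu).sub ((hasDerivAt_Li2R hb).comp t hv)).sub
    ((hasDerivAt_Li2R hxt).comp t hw)).congr_deriv (dslope_log_one_sub_combination_eq hxt ht)

section DoubleLog

open Finset

noncomputable def li11Term (x y : ℝ) (p : ℕ × ℕ) : ℝ :=
  if 0 < p.1 ∧ p.1 < p.2 then x ^ p.1 * y ^ p.2 / ((p.1 : ℝ) * (p.2 : ℝ)) else 0

noncomputable def logPartialSum (x : ℝ) (m : ℕ) : ℝ :=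
  ∑ i ∈ range m, x ^ (i + 1) / (i + 1)

variable {x t : ℝ}

lemma logPartialSum_succ_sub (x : ℝ) (m : ℕ) :
    logPartialSum x (m + 1) - logPartialSum x m = x ^ (m + 1) / (m + 1) := by
  simp [logPartialSum, sum_range_succ]

lemma abs_logPartialSum_le (hx : |x| < 1) (m : ℕ) :
    |logPartialSum x m| ≤ -log (1 - |x|) :=
  calc |logPartialSum x m| ≤ ∑ i ∈ range m, |x| ^ (i + 1) / (i + 1) := by
        refine (abs_sum_le_sum_abs _ _).trans_eq (sum_congr rfl fun i _ => ?_)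
        rw [abs_div, abs_pow, abs_of_pos (by positivity : (0:ℝ) < i + 1)]
    _ ≤ -log (1 - |x|) := sum_le_hasSum _ (fun _ _ => by positivity)
        (hasSum_pow_div_log_of_abs_lt_one (by rwa [abs_abs]))

lemma summable_logPartialSum_mul_pow (hx : |x| < 1) (ht : |t| < 1) :
    Summable fun m => logPartialSum x m * t ^ m := by
  refine .of_norm_bounded
    ((summable_geometric_of_lt_one (abs_nonneg t) ht).mul_left (-log (1 - |x|))) fun m => ?_
  rw [norm_mul, norm_pow, Real.norm_eq_abs, Real.norm_eq_abs]
  exact mul_le_mul_of_nonneg_right (abs_logPartialSum_le hx m) (by positivity)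

lemma hasSum_logPartialSum_mul_pow (hx : |x| < 1) (ht : |t| < 1) :
    HasSum (fun m => logPartialSum x m * t ^ m) (-log (1 - x * t) / (1 - t)) := by
  have hs := (summable_logPartialSum_mul_pow hx ht).hasSum
  set S := ∑' m, logPartialSum x m * t ^ m
  have hshift : HasSum (fun m => logPartialSum x (m + 1) * t ^ (m + 1)) S := by
    simpa [logPartialSum] using (hasSum_nat_add_iff' 1).2 hs
  have hdiff : HasSum (fun m : ℕ => (x * t) ^ (m + 1) / (m + 1)) (S - t * S) := by
    refine (hshift.sub (hs.mul_left t)).congr_fun fun m => ?_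
    rw [mul_pow, mul_div_right_comm, ← logPartialSum_succ_sub]
    ring
  have hlog := hasSum_pow_div_log_of_abs_lt_one
    (by rw [abs_mul]; exact mul_lt_one_of_nonneg_of_lt_one_left (abs_nonneg x) hx ht.le)
  have h1t : 1 - t ≠ 0 := sub_ne_zero.2 (abs_lt.1 ht).2.ne'
  have hS : S = -log (1 - x * t) / (1 - t) := by
    rw [eq_div_iff h1t, ← hdiff.unique hlog]
    ring
  rwa [← hS]

lemma hasDerivAt_tsum_logPartialSum_mul_pow_succ (hx : |x| < 1) (ht : |t| < 1) :
    HasDerivAt (fun u => ∑' m : ℕ, logPartialSum x m * u ^ (m + 1) / (m + 1))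
      (∑' m : ℕ, logPartialSum x m * t ^ m) t := by
  obtain ⟨r, htr, hr1⟩ := exists_between ht
  refine hasDerivAt_tsum_of_isPreconnected (u := fun m => -log (1 - |x|) * r ^ m)
    (t := Metric.ball 0 r) (y₀ := 0) (g' := fun m u => logPartialSum x m * u ^ m)
    ((summable_geometric_of_lt_one ((abs_nonneg t).trans htr.le) hr1).mul_left _)
    Metric.isOpen_ball (convex_ball 0 r).isPreconnected (fun m u _ => ?_) (fun m u hu => ?_)
    (Metric.mem_ball_self (by linarith [abs_nonneg t])) (by simp)
    (mem_ball_zero_iff.2 htr)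
  · refine (((hasDerivAt_pow (m + 1) u).const_mul _).div_const _).congr_deriv ?_
    push_cast
    field_simp
  · rw [norm_mul, norm_pow, Real.norm_eq_abs]
    exact mul_le_mul (abs_logPartialSum_le hx m)
      (pow_le_pow_left₀ (norm_nonneg u) (mem_ball_zero_iff.1 hu).le m) (by positivity)
      (neg_nonneg.2 (log_nonpos (by linarith [abs_nonneg x]) (by linarith [abs_nonneg x])))

lemma abs_li11Term_le (x t : ℝ) (p : ℕ × ℕ) :
    |li11Term x t p| ≤ |x| ^ p.1 * |t| ^ p.2 := by
  rw [li11Term]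
  split_ifs with h
  · have hj : (1 : ℝ) ≤ p.1 := by exact_mod_cast h.1
    have hk : (1 : ℝ) ≤ p.2 := by exact_mod_cast h.1.trans h.2
    rw [abs_div, abs_mul, abs_pow, abs_pow, abs_of_pos (by positivity : (0 : ℝ) < p.1 * p.2)]
    exact div_le_self (by positivity) (one_le_mul_of_one_le_of_one_le hj hk)
  · simp only [abs_zero]
    positivity

lemma summable_li11Term (hx : |x| < 1) (ht : |t| < 1) : Summable (li11Term x t) := by
  refine .of_norm_bounded (summable_mul_of_summable_norm (f := fun j => |x| ^ j)
    (g := fun k => |t| ^ k) ?_ ?_) (abs_li11Term_le x t)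
  · simpa using summable_geometric_of_lt_one (abs_nonneg x) hx
  · simpa using summable_geometric_of_lt_one (abs_nonneg t) ht

lemma sum_li11Term_succ (x t : ℝ) (m : ℕ) :
    ∑ j ∈ range (m + 1), li11Term x t (j, m + 1) =
      logPartialSum x m * t ^ (m + 1) / (m + 1) := by
  rw [sum_range_succ', logPartialSum, sum_mul, sum_div]
  simp only [li11Term, lt_irrefl, false_and, if_false, add_zero]
  refine sum_congr rfl fun i hi => ?_
  rw [if_pos ⟨i.succ_pos, by simpa using mem_range.1 hi⟩]
  push_cast
  field_simp

lemma hasSum_Li11 (hx : |x| < 1) (ht : |t| < 1) :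
    HasSum (fun m : ℕ => logPartialSum x m * t ^ (m + 1) / (m + 1)) (Li11 x t) := by
  have hswap : HasSum (fun p : ℕ × ℕ => li11Term x t p.swap) (Li11 x t) :=
    (Equiv.prodComm ℕ ℕ).hasSum_iff (f := li11Term x t) |>.2 (summable_li11Term hx ht).hasSum
  have hfiber (k : ℕ) :
      HasSum (fun j => li11Term x t (j, k)) (∑ j ∈ range k, li11Term x t (j, k)) :=
    hasSum_sum_of_ne_finset_zero fun j hj => by
      rw [li11Term, if_neg fun h => hj (mem_range.2 h.2)]
  have hfib := hswap.prod_fiberwise hfiber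
  simpa [sum_li11Term_succ] using (hasSum_nat_add_iff' 1).2 hfib

lemma hasDerivAt_Li11 (hx : |x| < 1) (ht : |t| < 1) :
    HasDerivAt (Li11 x) (-log (1 - x * t) / (1 - t)) t := by
  rw [← (hasSum_logPartialSum_mul_pow hx ht).tsum_eq]
  refine (hasDerivAt_tsum_logPartialSum_mul_pow_succ hx ht).congr_of_eventuallyEq ?_
  filter_upwards [(isOpen_lt continuous_abs continuous_const).mem_nhds ht] with u hu
  exact (hasSum_Li11 hx hu).tsum_eq.symm

lemma Li11_zero_right (hx : |x| < 1) : Li11 x 0 = 0 :=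
  (hasSum_Li11 hx (by simp)).unique (by simp)

end DoubleLog

theorem Li11_eq_Li2R_of_abs_lt_one {x y : ℝ} (hx : |x| < 1) (hy : |y| < 1) :
    Li11 x y = Li2R ((x * y - y) / (1 - y)) - Li2R (y / (y - 1)) - Li2R (x * y) := by
  have hderiv (t : ℝ) (ht : t ∈ Ioo (-1 : ℝ) 1) :
      HasDerivAt (Li11 x) (-log (1 - x * t) / (1 - t)) t ∧
      HasDerivAt (fun u => Li2R ((x * u - u) / (1 - u)) - Li2R (u / (u - 1)) - Li2R (x * u))
        (-log (1 - x * t) / (1 - t)) t := by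
    have ht' : |t| < 1 := abs_lt.2 ht
    have hxt : |x * t| < 1 := by
      rw [abs_mul]
      exact mul_lt_one_of_nonneg_of_lt_one_left (abs_nonneg x) hx ht'.le
    exact ⟨hasDerivAt_Li11 hx ht', hasDerivAt_Li2R_combination (abs_lt.1 hxt).2 ht.2⟩
  refine isOpen_Ioo.eqOn_of_deriv_eq isPreconnected_Ioo
    (fun t ht => (hderiv t ht).1.differentiableAt.differentiableWithinAt)
    (fun t ht => (hderiv t ht).2.differentiableAt.differentiableWithinAt)
    (fun t ht => (hderiv t ht).1.deriv.trans (hderiv t ht).2.deriv.symm)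
    (x := 0) (by norm_num) (by simp [Li11_zero_right hx, Li2R_zero]) (abs_lt.1 hy)

/-- `Li_{1,1}(x,y) = Li₂((xy-y)/(1-y)) - Li₂(y/(y-1)) - Li₂(xy)`
(restricting, as the context permits, to real `x, y ∈ (0,1)`, where all
dilogarithm arguments lie in `(-∞,1)`). -/
theorem doubleLog_as_dilogs (x y : ℝ) (hx0 : 0 < x) (hx1 : x < 1)
    (hy0 : 0 < y) (hy1 : y < 1) :
    Li11 x y = Li2R ((x * y - y) / (1 - y)) - Li2R (y / (y - 1)) - Li2R (x * y) :=
  Li11_eq_Li2R_of_abs_lt_one (abs_lt.2 ⟨by linarith, hx1⟩) (abs_lt.2 ⟨by linarith, hy1⟩)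
end

section
/- The single-valued double logarithm satisfies the functional equation $\mathcal{L}_{1,1}(x,y) = -\mathcal{L}_{1,1}\left(1-x, \frac{y}{y-1}\right)$ for all $x, y$ in a domain where both sides are defined (e.g. $x \in (0,1)$ and $y$ in the open upper half plane). -/
/-!
Put `w = y / (y - 1)`. Since `w / (w - 1) = y`, `((1 - x) w - w) / (1 - w) = x y` and
`(1 - x) w = (x y - y) / (1 - y)`, the functional equation is algebra once `𝓛₂(w) = -𝓛₂(y)`.
That is the imaginary part of Landen's identity `Li₂(w) = -Li₂(y) - log²(1 - y) / 2`, valid on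
`ℂ \ [1, ∞)`: differentiating under the integral sign gives `z Li₂'(z) = -log(1 - z)`, so both
sides have the same derivative on this star-shaped open set, and they agree at `0`.
-/

/-- The dilogarithm on `ℂ \ [1,∞)` (principal branch), via
`Li₂(z) = -∫_0^1 log(1 - z t)/t dt`. -/
noncomputable def Li2C (z : ℂ) : ℂ := -∫ t in (0:ℝ)..1, Complex.log (1 - z * t) / (t : ℂ)

/-- The single-valued dilogarithm `𝓛₂(z) = Im(Li₂ z) + arg(1-z) log|z|`. -/
noncomputable def L2 (z : ℂ) : ℝ := (Li2C z).im + (1 - z).arg * Real.log ‖z‖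

/-- The single-valued double logarithm, expressed via `𝓛₂`:
`𝓛_{1,1}(x,y) = 𝓛₂((xy-y)/(1-y)) - 𝓛₂(y/(y-1)) - 𝓛₂(xy)`. -/
noncomputable def L11 (x y : ℂ) : ℝ :=
  L2 ((x * y - y) / (1 - y)) - L2 (y / (y - 1)) - L2 (x * y)

open MeasureTheory Set Complex intervalIntegral Metric Topology

lemma one_sub_mul_ofReal_mem_slitPlane {z : ℂ} (hz : 1 - z ∈ slitPlane) {t : ℝ}
    (ht : t ∈ Icc (0 : ℝ) 1) : 1 - z * t ∈ slitPlane := by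
  convert starConvex_one_slitPlane.add_smul_mem (y := -z) (by rwa [← sub_eq_add_neg]) ht.1 ht.2
    using 1
  simp [Complex.real_smul, sub_eq_add_neg, mul_comm]

lemma isOpen_one_sub_mem_slitPlane : IsOpen {z : ℂ | 1 - z ∈ slitPlane} :=
  isOpen_slitPlane.preimage (by fun_prop)

lemma starConvex_one_sub_mem_slitPlane : StarConvex ℝ 0 {z : ℂ | 1 - z ∈ slitPlane} := by
  intro z hz a b _ hb hab
  simpa [Complex.real_smul, mul_comm] using one_sub_mul_ofReal_mem_slitPlane hz ⟨hb, by linarith⟩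

lemma inv_mem_slitPlane {z : ℂ} (hz : z ∈ slitPlane) : z⁻¹ ∈ slitPlane := by
  have hns : 0 < normSq z := normSq_pos.mpr (slitPlane_ne_zero hz)
  rw [mem_slitPlane_iff] at hz ⊢
  rw [inv_re, inv_im]
  rcases hz with h | h
  · exact Or.inl (div_pos h hns)
  · exact Or.inr (div_ne_zero (neg_ne_zero.mpr h) hns.ne')

noncomputable def li2Integrand (z : ℂ) : ℝ → ℂ := dslope (fun t : ℝ => log (1 - z * t)) 0

lemma li2Integrand_of_ne_zero (z : ℂ) {t : ℝ} (ht : t ≠ 0) :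
    li2Integrand z t = log (1 - z * t) / t := by
  simp [li2Integrand, dslope_of_ne _ ht, slope_def_module, div_eq_inv_mul, Complex.real_smul]

lemma Li2C_eq_neg_integral_li2Integrand (z : ℂ) :
    Li2C z = -∫ t in (0 : ℝ)..1, li2Integrand z t := by
  rw [Li2C, intervalIntegral.integral_congr_ae]
  filter_upwards with t ht
  rw [uIoc_of_le zero_le_one] at ht
  rw [li2Integrand_of_ne_zero z ht.1.ne']

lemma continuousOn_li2Integrand {z : ℂ} (hz : 1 - z ∈ slitPlane) :
    ContinuousOn (li2Integrand z) (Icc 0 1) := by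
  set s := {t : ℝ | 1 - z * t ∈ slitPlane}
  have hs : IsOpen s := isOpen_slitPlane.preimage (by fun_prop)
  have hIcc : Icc 0 1 ⊆ s := fun t ht => one_sub_mul_ofReal_mem_slitPlane hz ht
  have hlog : ContinuousOn (fun t : ℝ => log (1 - z * t)) s :=
    ContinuousOn.clog (by fun_prop) fun t ht => ht
  have hdiff : DifferentiableAt ℝ (fun t : ℝ => log (1 - z * t)) 0 := by
    have hinner : HasDerivAt (fun w : ℂ => 1 - z * w) (-z) ((0 : ℝ) : ℂ) := by
      simpa using ((hasDerivAt_id _).const_mul z).const_sub 1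
    exact ((hasDerivAt_log (by simp)).comp _ hinner).comp_ofReal.differentiableAt
  exact ((continuousOn_dslope (hs.mem_nhds (hIcc ⟨le_rfl, zero_le_one⟩))).mpr
    ⟨hlog, hdiff⟩).mono hIcc

lemma hasDerivAt_li2Integrand {z : ℂ} {t : ℝ} (ht : t ≠ 0) (hz : 1 - z * t ∈ slitPlane) :
    HasDerivAt (fun w => li2Integrand w t) (-(1 - z * t)⁻¹) z := by
  have hinner : HasDerivAt (fun w : ℂ => 1 - w * t) (-(t : ℂ)) z := by
    simpa using ((hasDerivAt_id z).mul_const (t : ℂ)).const_sub 1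
  have ht' : (t : ℂ) ≠ 0 := ofReal_ne_zero.mpr ht
  rw [show (fun w => li2Integrand w t) = fun w => log (1 - w * t) / t from
    funext fun w => li2Integrand_of_ne_zero w ht]
  exact (((hasDerivAt_log hz).comp z hinner).div_const (t : ℂ)).congr_deriv (by rw [mul_neg, neg_div, mul_div_assoc, div_self ht', mul_one])

lemma exists_bound_inv_one_sub_mul {K : Set ℂ} (hK : IsCompact K)
    (hKD : ∀ w ∈ K, 1 - w ∈ slitPlane) :
    ∃ C, ∀ w ∈ K, ∀ t ∈ Icc (0 : ℝ) 1, ‖(1 - w * t)⁻¹‖ ≤ C := by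
  have hcont : ContinuousOn (fun p : ℂ × ℝ => (1 - p.1 * p.2)⁻¹) (K ×ˢ Icc 0 1) :=
    ContinuousOn.inv₀ (by fun_prop) fun p hp =>
      slitPlane_ne_zero (one_sub_mul_ofReal_mem_slitPlane (hKD _ hp.1) hp.2)
  obtain ⟨C, hC⟩ := (hK.prod isCompact_Icc).exists_bound_of_continuousOn hcont
  exact ⟨C, fun w hw t ht => hC (w, t) ⟨hw, ht⟩⟩

lemma hasDerivAt_Li2C {z : ℂ} (hz : 1 - z ∈ slitPlane) :
    HasDerivAt Li2C (∫ t in (0 : ℝ)..1, (1 - z * t)⁻¹) z := by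
  obtain ⟨ε, hε, hεD⟩ := nhds_basis_closedBall.mem_iff.mp
    (isOpen_one_sub_mem_slitPlane.mem_nhds hz)
  obtain ⟨C, hC⟩ := exists_bound_inv_one_sub_mul (isCompact_closedBall z ε) hεD
  have hI : uIoc (0 : ℝ) 1 = Ioc 0 1 := uIoc_of_le zero_le_one
  have hF_meas : ∀ᶠ w in 𝓝 z, AEStronglyMeasurable (li2Integrand w) (volume.restrict (uIoc 0 1)) := by
    filter_upwards [closedBall_mem_nhds z hε] with w hw
    rw [hI]
    exact ((continuousOn_li2Integrand (hεD hw)).mono Ioc_subset_Icc_self).aestronglyMeasurable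
      measurableSet_Ioc
  have hF'_meas : AEStronglyMeasurable (fun t : ℝ => -(1 - z * t)⁻¹) (volume.restrict (uIoc 0 1)) := by
    rw [hI]
    refine ContinuousOn.aestronglyMeasurable ?_ measurableSet_Ioc
    exact (ContinuousOn.inv₀ (by fun_prop) fun t ht =>
      slitPlane_ne_zero (one_sub_mul_ofReal_mem_slitPlane hz (Ioc_subset_Icc_self ht))).neg
  have h_bound : ∀ᵐ t ∂volume, t ∈ uIoc (0 : ℝ) 1 → ∀ w ∈ ball z ε, ‖-(1 - w * t)⁻¹‖ ≤ C := by
    filter_upwards with t ht w hw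
    rw [hI] at ht
    rw [norm_neg]
    exact hC w (ball_subset_closedBall hw) t (Ioc_subset_Icc_self ht)
  have h_diff : ∀ᵐ t ∂volume, t ∈ uIoc (0 : ℝ) 1 → ∀ w ∈ ball z ε,
      HasDerivAt (fun w => li2Integrand w t) (-(1 - w * t)⁻¹) w := by
    filter_upwards with t ht w hw
    rw [hI] at ht
    exact hasDerivAt_li2Integrand ht.1.ne'
      (one_sub_mul_ofReal_mem_slitPlane (hεD (ball_subset_closedBall hw)) (Ioc_subset_Icc_self ht))
  have h := (hasDerivAt_integral_of_dominated_loc_of_deriv_le (ball_mem_nhds z hε) hF_meas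
    ((continuousOn_li2Integrand hz).intervalIntegrable_of_Icc zero_le_one) hF'_meas h_bound
    intervalIntegrable_const h_diff).2.neg
  rw [intervalIntegral.integral_neg, neg_neg] at h
  rwa [funext Li2C_eq_neg_integral_li2Integrand]

lemma mul_integral_inv_one_sub_mul {z : ℂ} (hz : 1 - z ∈ slitPlane) :
    z * ∫ t in (0 : ℝ)..1, (1 - z * t)⁻¹ = -log (1 - z) := by
  rw [← log_inv _ (slitPlane_arg_ne_pi hz), log_inv_eq_integral hz]
  simp only [Complex.real_smul, mul_comm]

lemma Li2C_zero : Li2C 0 = 0 := by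
  simp [Li2C]

lemma one_sub_div_sub_one {u : ℂ} (hu : 1 - u ≠ 0) : 1 - u / (u - 1) = (1 - u)⁻¹ := by
  have hu' : u - 1 ≠ 0 := by rwa [← neg_sub, neg_ne_zero]
  field_simp
  ring

lemma hasDerivAt_landen {u : ℂ} (hu : 1 - u ∈ slitPlane) :
    HasDerivAt (fun v => Li2C (v / (v - 1)) + Li2C v + log (1 - v) ^ 2 / 2) 0 u := by
  have hu1' : 1 - u ≠ 0 := slitPlane_ne_zero hu
  have hu1 : u - 1 ≠ 0 := by rwa [← neg_sub, neg_ne_zero]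
  have hw : 1 - u / (u - 1) ∈ slitPlane := by
    rw [one_sub_div_sub_one hu1']; exact inv_mem_slitPlane hu
  have hlog : HasDerivAt (fun v => log (1 - v)) ((1 - u)⁻¹ * -1) u :=
    (hasDerivAt_log hu).comp u ((hasDerivAt_id u).const_sub 1)
  refine ((((hasDerivAt_Li2C hw).comp u ((hasDerivAt_id u).div ((hasDerivAt_id u).sub_const 1)
    hu1)).add (hasDerivAt_Li2C hu)).add ((hlog.pow 2).div_const 2)).congr_deriv ?_
  rcases eq_or_ne u 0 with rfl | hu0
  · simp
  have hDu := eq_div_of_mul_eq hu0 ((mul_comm _ _).trans (mul_integral_inv_one_sub_mul hu))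
  have hDw := eq_div_of_mul_eq (div_ne_zero hu0 hu1)
    ((mul_comm _ _).trans (mul_integral_inv_one_sub_mul hw))
  rw [one_sub_div_sub_one hu1', log_inv _ (slitPlane_arg_ne_pi hu)] at hDw
  rw [hDu, hDw, id]
  field_simp
  ring

theorem Li2C_div_sub_one {y : ℂ} (hy : 1 - y ∈ slitPlane) :
    Li2C (y / (y - 1)) = -Li2C y - log (1 - y) ^ 2 / 2 := by
  have hconst := isOpen_one_sub_mem_slitPlane.is_const_of_deriv_eq_zero
    (starConvex_one_sub_mem_slitPlane.isPathConnected (by simp)).isConnected.isPreconnected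
    (fun u hu => (hasDerivAt_landen hu).differentiableAt.differentiableWithinAt)
    (fun u hu => (hasDerivAt_landen hu).deriv) hy (show (0 : ℂ) ∈ _ by simp)
  simp only [zero_div, Li2C_zero, sub_zero, log_one] at hconst
  linear_combination hconst

theorem L2_div_sub_one {y : ℂ} (hy : 1 - y ∈ slitPlane) : L2 (y / (y - 1)) = -L2 y := by
  rcases eq_or_ne y 0 with rfl | hy0
  · simp [L2, Li2C_zero]
  have hy1 : 1 - y ≠ 0 := slitPlane_ne_zero hy
  have hy1' : y - 1 ≠ 0 := by rwa [← neg_sub, neg_ne_zero]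
  have him : (log (1 - y) ^ 2 / 2).im = Real.log ‖1 - y‖ * (1 - y).arg := by
    simp only [pow_two, div_ofNat_im, mul_im, log_re, log_im]
    ring
  have harg : (1 - y / (y - 1)).arg = -(1 - y).arg := by
    rw [one_sub_div_sub_one hy1, arg_inv, if_neg (slitPlane_arg_ne_pi hy)]
  have hnorm : Real.log ‖y / (y - 1)‖ = Real.log ‖y‖ - Real.log ‖1 - y‖ := by
    rw [norm_div, Real.log_div (norm_ne_zero_iff.mpr hy0) (norm_ne_zero_iff.mpr hy1'),
      norm_sub_rev]
  rw [L2, L2, Li2C_div_sub_one hy, sub_im, neg_im, him, harg, hnorm]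
  ring

lemma L11_one_sub_div_sub_one (x : ℂ) {y : ℂ} (hy : 1 - y ≠ 0) :
    L11 (1 - x) (y / (y - 1)) = L2 (x * y) - L2 y - L2 ((x * y - y) / (1 - y)) := by
  have hy' : y - 1 ≠ 0 := by rwa [← neg_sub, neg_ne_zero]
  have e1 : ((1 - x) * (y / (y - 1)) - y / (y - 1)) / (1 - y / (y - 1)) = x * y := by
    field_simp; ring
  have e2 : y / (y - 1) / (y / (y - 1) - 1) = y := by
    field_simp; ring
  have e3 : (1 - x) * (y / (y - 1)) = (x * y - y) / (1 - y) := by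
    field_simp; ring
  rw [L11, e1, e2, e3]

theorem L11_functional_equation_general (x : ℝ)
    (y : ℂ) (hy : 0 < y.im) :
    L11 (x : ℂ) y = -L11 ((1 - x : ℝ) : ℂ) (y / (y - 1)) := by
  have hy' : 1 - y ∈ slitPlane := mem_slitPlane_iff.mpr (Or.inr (by simp [hy.ne']))
  rw [ofReal_sub, ofReal_one, L11_one_sub_div_sub_one _ (slitPlane_ne_zero hy'), L11,
    L2_div_sub_one hy']
  ring

/-- the functional equation
`𝓛_{1,1}(x,y) = -𝓛_{1,1}(1-x, y/(y-1))`, for `x ∈ (0,1)` real and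
`y` in the open upper half plane. -/
theorem L11_functional_equation (x : ℝ) (hx0 : 0 < x) (hx1 : x < 1)
    (y : ℂ) (hy : 0 < y.im) :
    L11 (x : ℂ) y = -L11 ((1 - x : ℝ) : ℂ) (y / (y - 1)) :=
  L11_functional_equation_general x y hy
end
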